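/- In a tree of transitive tournaments with a unique source, the unique shortest undirected trail between any two distinct nodes u, v is either a directed path from u to v, a directed path from v to u, or the concatenation of two directed paths p(w,u) and p(w,v) issuing from some common node w distinct from u and v; in particular, the trail contains no node whose two neighbors on the trail both point into it. -/

import Mathlib

/-!
Two in-neighbours `a ≠ b` of a node `x` are adjacent. Everything descends from the unique
source, so `a` and `b` have a common ancestor `c` that is maximal; then any directed paths
`c ⇝ a` and `c ⇝ b` meet only in `c`, and together with the edges `a → x ← b` they form a cycle.
A cycle is biconnected, so it lies in a block, and blocks of a block graph are cliques.

Hence a shortest trail, which is a path, has no node whose two trail-neighbours both point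
into it: otherwise it could be shortened through the edge between them. A trail without such
a node climbs against the edges up to some node `w` and then follows the edges down from `w`.
-/

open scoped Classical

universe u

variable {V : Type u}

/-- The undirected skeleton of a directed graph given by edge relation `E`. -/
def skeleton (E : V → V → Prop) : SimpleGraph V where
  Adj u v := u ≠ v ∧ (E u v ∨ E v u)
  symm := ⟨fun u v h => ⟨h.1.symm, h.2.symm⟩⟩
  loopless := ⟨fun v h => h.1 rfl⟩

/-- A set of vertices is biconnected if the induced subgraph is connected and
remains connected after removal of any single vertex. -/
def IsBiconnected (G : SimpleGraph V) (S : Set V) : Prop :=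
  (G.induce S).Connected ∧ ∀ v ∈ S, (G.induce (S \ {v})).Connected

/-- A block graph: every maximal biconnected set of vertices is a clique. -/
def IsBlockGraph (G : SimpleGraph V) : Prop :=
  ∀ S : Set V, IsBiconnected G S →
    (∀ S', S ⊆ S' → IsBiconnected G S' → S = S') → G.IsClique S

/-- A tree of transitive tournaments: a (finite) directed acyclic graph that is
connected and whose skeleton is a block graph. -/
def IsTTT (E : V → V → Prop) : Prop :=
  (∀ v, ¬ Relation.TransGen E v v) ∧ (skeleton E).Connected ∧ IsBlockGraph (skeleton E)

/-- `l` is the full vertex sequence of a directed path from `a` to `b`. -/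
def IsDirSeq (E : V → V → Prop) (a b : V) (l : List V) : Prop :=
  l.Chain' E ∧ l.head? = some a ∧ l.getLast? = some b

/-- A maximal clique of a simple graph. -/
def IsMaxClique (G : SimpleGraph V) (S : Set V) : Prop :=
  G.IsClique S ∧ ∀ S', G.IsClique S' → S ⊆ S' → S = S'

/-- The product of the edge weights along a vertex sequence. -/
def prodAlong (c : V → V → ℝ) : List V → ℝ
  | [] => 1
  | [_] => 1
  | a :: b :: rest => c a b * prodAlong c (b :: rest)

open Relation

section Acyclic

variable {E : V → V → Prop}

theorem List.IsChain.nodup_of_acyclic (hE : ∀ v, ¬ TransGen E v v) {l : List V}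
    (h : l.IsChain E) : l.Nodup :=
  (List.isChain_iff_pairwise.mp (h.imp fun _ _ => TransGen.single)).imp
    (S := (· ≠ ·)) fun hab heq => hE _ (heq ▸ hab)

theorem skeleton_adj_of_acyclic (hE : ∀ v, ¬ TransGen E v v) {a b : V} (h : E a b) :
    (skeleton E).Adj a b :=
  ⟨by rintro rfl; exact hE a (.single h), Or.inl h⟩

theorem reflTransGen_of_unique_source [Finite V] (hE : ∀ v, ¬ TransGen E v v) {s : V}
    (hs : ∀ v, (∀ w, ¬ E w v) → v = s) (v : V) : ReflTransGen E s v := by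
  have : Std.Irrefl (TransGen E) := ⟨hE⟩
  obtain ⟨m, hmv, hmin⟩ := (Finite.wellFounded_of_trans_of_irrefl (TransGen E)).has_min
    {m | ReflTransGen E m v} ⟨v, .refl⟩
  have hm : m = s := hs m fun w hwm => hmin w (hmv.head hwm) (.single hwm)
  exact hm ▸ hmv

theorem exists_disjoint_paths [Finite V] (hE : ∀ v, ¬ TransGen E v v) {s a b : V}
    (ha : ReflTransGen E s a) (hb : ReflTransGen E s b) :
    ∃ c p q, (c :: p).IsChain E ∧ (c :: q).IsChain E ∧
      (c :: p).getLast (List.cons_ne_nil c p) = a ∧ (c :: q).getLast (List.cons_ne_nil c q) = b ∧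
      p.Disjoint q := by
  have : Std.Irrefl (Function.swap (TransGen E)) := ⟨hE⟩
  obtain ⟨c, ⟨hca, hcb⟩, hmax⟩ :=
    (Finite.wellFounded_of_trans_of_irrefl (Function.swap (TransGen E))).has_min
      {c | ReflTransGen E c a ∧ ReflTransGen E c b} ⟨s, ha, hb⟩
  obtain ⟨p, hp, hpa⟩ := List.exists_isChain_cons_of_relationReflTransGen hca
  obtain ⟨q, hq, hqb⟩ := List.exists_isChain_cons_of_relationReflTransGen hcb
  refine ⟨c, p, q, hp, hq, hpa, hqb, fun y hyp hyq => hmax y ⟨?_, ?_⟩ ?_⟩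
  · exact hp.backwards_cons_induction (ReflTransGen E · a) p hpa (fun _ _ => .head) .refl y
      (List.mem_cons_of_mem c hyp)
  · exact hq.backwards_cons_induction (ReflTransGen E · b) q hqb (fun _ _ => .head) .refl y
      (List.mem_cons_of_mem c hyq)
  · exact (hp.imp fun _ _ => TransGen.single).rel_cons hyp

end Acyclic

namespace SimpleGraph

variable {G : SimpleGraph V}

theorem induce_connected_of_isChain : ∀ {l : List V}, l ≠ [] → l.IsChain G.Adj →
    (G.induce {v | v ∈ l}).Connected
  | [x], _, _ => by
    rw [show {v | v ∈ [x]} = ({x} : Set V) by ext; simp, induce_singleton_eq_top]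
    exact connected_top
  | x :: y :: l, _, h => by
    have hxy := (List.isChain_cons_cons.mp h)
    have : {v | v ∈ x :: y :: l} = {x, y} ∪ {v | v ∈ y :: l} := by
      ext
      simp only [List.mem_cons, Set.mem_ofPred_eq, Set.mem_union, Set.mem_insert_iff,
        Set.mem_singleton_iff]
      tauto
    rw [this]
    exact induce_union_connected (induce_pair_connected_of_adj hxy.1).preconnected
      (induce_connected_of_isChain (List.cons_ne_nil y l) hxy.2).preconnected ⟨y, by simp⟩

theorem isBiconnected_of_isChain_cycle {x : V} {l : List V} (hl : l ≠ [])
    (hc : (x :: l ++ [x]).IsChain G.Adj) (hnd : (x :: l).Nodup) :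
    IsBiconnected G {v | v ∈ x :: l} := by
  refine ⟨induce_connected_of_isChain (List.cons_ne_nil x l) (hc.infix ⟨[], [x], rfl⟩), ?_⟩
  intro v hv
  rcases List.mem_cons.mp hv with rfl | hv
  · have : {w | w ∈ v :: l} \ {v} = {w | w ∈ l} := by
      ext w; simp only [List.nodup_cons] at hnd; grind
    exact this ▸ induce_connected_of_isChain hl (hc.infix ⟨[v], [v], rfl⟩)
  · obtain ⟨l₁, l₂, rfl⟩ := List.append_of_mem hv
    have : {w | w ∈ x :: (l₁ ++ v :: l₂)} \ {v} = {w | w ∈ l₂ ++ [x] ++ l₁} := by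
      ext w; simp only [List.nodup_cons, List.nodup_append] at hnd; grind
    rw [this]
    refine induce_connected_of_isChain (by simp) (List.IsChain.append_overlap ?_ ?_ (by simp))
    · exact hc.infix ⟨x :: l₁ ++ [v], [], by simp⟩
    · exact hc.infix ⟨[], v :: l₂ ++ [x], by simp⟩

end SimpleGraph

theorem IsBlockGraph.isClique_of_isBiconnected [Finite V] {G : SimpleGraph V}
    (hG : IsBlockGraph G) {S : Set V} (hS : IsBiconnected G S) : G.IsClique S := by
  obtain ⟨T, ⟨hST, hT⟩, hTmax⟩ := (Set.toFinite {T | S ⊆ T ∧ IsBiconnected G T}).exists_maximalFor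
    id _ ⟨S, subset_rfl, hS⟩
  exact (hG T hT fun T' hTT' hT' => hTT'.antisymm (hTmax ⟨hST.trans hTT', hT'⟩ hTT')).subset hST

theorem rel_or_rel_of_common_child [Finite V] {E : V → V → Prop}
    (hE : ∀ v, ¬ TransGen E v v) (hblock : IsBlockGraph (skeleton E))
    (hsrc : ∃! s : V, ∀ w, ¬ E w s) {a b x : V} (hab : a ≠ b) (hax : E a x) (hbx : E b x) :
    E a b ∨ E b a := by
  obtain ⟨s, -, hs⟩ := hsrc
  obtain ⟨c, p, q, hp, hq, hpa, hqb, hpq⟩ := exists_disjoint_paths hE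
    (reflTransGen_of_unique_source hE hs a) (reflTransGen_of_unique_source hE hs b)
  have hpx : (c :: p ++ [x]).IsChain E :=
    hp.append (.singleton x) (by simp [List.getLast?_eq_some_getLast, hpa, hax])
  have hqx : (c :: q ++ [x]).IsChain E :=
    hq.append (.singleton x) (by simp [List.getLast?_eq_some_getLast, hqb, hbx])
  have hcycle : (x :: (p.reverse ++ c :: q) ++ [x]).IsChain (skeleton E).Adj := by
    have h₁ : (x :: p.reverse ++ [c]).IsChain (skeleton E).Adj := by
      simpa using List.isChain_reverse.mpr
        (hpx.imp fun _ _ h => (skeleton_adj_of_acyclic hE h).symm)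
    have h₂ : ([c] ++ q ++ [x]).IsChain (skeleton E).Adj :=
      hqx.imp fun _ _ => skeleton_adj_of_acyclic hE
    simpa using h₁.append_overlap h₂ (List.cons_ne_nil c [])
  have hnd : (x :: (p.reverse ++ c :: q)).Nodup := by
    have := hpx.nodup_of_acyclic hE
    have := hqx.nodup_of_acyclic hE
    simp only [List.nodup_cons, List.nodup_append, List.nodup_reverse, List.mem_append,
      List.mem_cons, List.mem_reverse] at *
    grind [List.Disjoint]
  have hclique := hblock.isClique_of_isBiconnected
    (SimpleGraph.isBiconnected_of_isChain_cycle (by simp) hcycle hnd)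
  have hsub : ∀ y, y ∈ c :: p ∨ y ∈ c :: q → y ∈ {y | y ∈ x :: (p.reverse ++ c :: q)} := by
    intro y
    simp only [Set.mem_ofPred_eq, List.mem_cons, List.mem_append, List.mem_reverse]
    tauto
  exact (hclique (hsub a (.inl (hpa ▸ List.getLast_mem _)))
    (hsub b (.inr (hqb ▸ List.getLast_mem _))) hab).2

section DirSeq

variable {R : V → V → Prop} {u v : V}

theorem isDirSeq_iff {l : List V} :
    IsDirSeq R u v l ↔ l.IsChain R ∧ l.head? = some u ∧ l.getLast? = some v :=
  Iff.rfl

theorem isDirSeq_append_cons {l₁ l₂ : List V} {x : V} :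
    IsDirSeq R u v (l₁ ++ x :: l₂) ↔ IsDirSeq R u x (l₁ ++ [x]) ∧ IsDirSeq R x v (x :: l₂) := by
  rw [isDirSeq_iff, isDirSeq_iff, isDirSeq_iff, List.isChain_split]
  cases l₁ <;> simp [List.getLast?_cons] <;> tauto

theorem isDirSeq_pair {a b : V} : IsDirSeq R a b [a, b] ↔ R a b := by
  simp [isDirSeq_iff]

theorem IsDirSeq.nodup_of_minimal {t : List V} (ht : IsDirSeq R u v t)
    (hmin : ∀ t', IsDirSeq R u v t' → t.length ≤ t'.length) : t.Nodup := by
  refine List.nodup_iff_sublist.mpr fun x hx => ?_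
  obtain ⟨r₁, r₂, rfl, h₁, h₂⟩ := List.cons_sublist_iff.mp hx
  obtain ⟨l₁, m₁, rfl⟩ := List.append_of_mem h₁
  obtain ⟨m₂, l₂, rfl⟩ := List.append_of_mem (List.singleton_sublist.mp h₂)
  have hsplit : IsDirSeq R u x (l₁ ++ [x]) ∧ IsDirSeq R x v (x :: (m₁ ++ m₂) ++ x :: l₂) :=
    isDirSeq_append_cons.mp (by simpa using ht)
  have := hmin _ (isDirSeq_append_cons.mpr ⟨hsplit.1, (isDirSeq_append_cons.mp hsplit.2).2⟩)
  simp only [List.length_append, List.length_cons] at this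
  omega

theorem IsDirSeq.not_rel_of_minimal {t : List V} (ht : IsDirSeq R u v t)
    (hmin : ∀ t', IsDirSeq R u v t' → t.length ≤ t'.length) {a z b : V}
    (h : [a, z, b] <:+: t) : ¬ R a b := by
  intro hab
  obtain ⟨l₁, l₂, rfl⟩ := h
  have hsplit : IsDirSeq R u a (l₁ ++ [a]) ∧ IsDirSeq R a v ([a, z] ++ b :: l₂) :=
    isDirSeq_append_cons.mp (by simpa using ht)
  have hshort : IsDirSeq R a v ([a] ++ b :: l₂) :=
    isDirSeq_append_cons.mpr ⟨isDirSeq_pair.mpr hab, (isDirSeq_append_cons.mp hsplit.2).2⟩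
  have := hmin _ (isDirSeq_append_cons.mpr ⟨hsplit.1, hshort⟩)
  simp at this

end DirSeq

def IsValleyFree (E : V → V → Prop) (l : List V) : Prop :=
  ∀ a z b, [a, z, b] <:+: l → ¬ (E a z ∧ E b z)

theorem IsValleyFree.of_cons {E : V → V → Prop} {x : V} {l : List V}
    (h : IsValleyFree E (x :: l)) : IsValleyFree E l :=
  fun a z b hinf => h a z b (hinf.trans (List.suffix_cons x l).isInfix)

theorem exists_split_of_isValleyFree {E : V → V → Prop} :
    ∀ {l : List V}, l ≠ [] → l.IsChain (fun a b => E a b ∨ E b a) → IsValleyFree E l →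
      ∃ l₁ w l₂, l = l₁ ++ w :: l₂ ∧ (l₁ ++ [w]).IsChain (fun a b => E b a) ∧
        (w :: l₂).IsChain E
  | [x], _, _, _ => ⟨[], x, [], rfl, .singleton x, .singleton x⟩
  | x :: y :: l, _, hc, hvf => by
    obtain ⟨hxy, hc⟩ := List.isChain_cons_cons.mp hc
    obtain ⟨l₁, w, l₂, hl, h₁, h₂⟩ :=
      exists_split_of_isValleyFree (List.cons_ne_nil y l) hc hvf.of_cons
    rcases l₁ with _ | ⟨y', l₁⟩ <;> obtain ⟨rfl, rfl⟩ := List.cons_eq_cons.mp hl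
    · rcases hxy with hxy | hyx
      · exact ⟨[], x, y :: l, rfl, .singleton x, .cons_cons hxy h₂⟩
      · exact ⟨[x], y, l, rfl, .cons_cons hyx (.singleton y), h₂⟩
    · rcases hxy with hxy | hyx
      · obtain ⟨z, r, hzr⟩ := List.exists_cons_of_ne_nil (List.concat_ne_nil w l₁)
        rw [List.cons_append, hzr] at h₁
        have hzy : E z y := (List.isChain_cons_cons.mp h₁).1
        refine absurd ⟨hxy, hzy⟩ (hvf x y z ⟨[], r ++ l₂, ?_⟩)
        simpa using (congrArg (· ++ l₂) hzr).symm
      · exact ⟨x :: y :: l₁, w, l₂, rfl, .cons_cons hyx h₁, h₂⟩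

theorem stmt10_general {V : Type u} [Fintype V] (E : V → V → Prop)
    (httt : IsTTT E) (hsrc : ∃! u : V, ∀ w, ¬ E w u)
    (u v : V) (t : List V)
    (ht : IsDirSeq (fun a b => E a b ∨ E b a) u v t)
    (hmin : ∀ t' : List V, IsDirSeq (fun a b => E a b ∨ E b a) u v t' →
      t.length ≤ t'.length) :
    t.Chain' E ∨ t.Chain' (fun a b => E b a) ∨
      ∃ (w : V) (l1 l2 : List V), t = l1 ++ w :: l2 ∧ w ≠ u ∧ w ≠ v ∧
        (l1 ++ [w]).Chain' (fun a b => E b a) ∧ (w :: l2).Chain' E := by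
  obtain ⟨hE, -, hblock⟩ := httt
  have hnd : t.Nodup := ht.nodup_of_minimal hmin
  have hvf : IsValleyFree E t := by
    rintro a z b hinf ⟨haz, hbz⟩
    have hab : a ≠ b := by
      have := hnd.sublist hinf.sublist
      simp only [List.nodup_cons, List.mem_cons, List.not_mem_nil] at this
      tauto
    exact ht.not_rel_of_minimal hmin hinf (rel_or_rel_of_common_child hE hblock hsrc hab haz hbz)
  obtain ⟨hc, hu, hv⟩ := isDirSeq_iff.mp ht
  obtain ⟨l₁, w, l₂, rfl, h₁, h₂⟩ :=
    exists_split_of_isValleyFree (by rintro rfl; simp at hu) hc hvf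
  rcases l₁ with _ | ⟨a, l₁⟩
  · exact Or.inl h₂
  rcases l₂.eq_nil_or_concat with rfl | ⟨l₂, b, rfl⟩
  · exact Or.inr (Or.inl h₁)
  have hau : a = u := by simpa using hu
  have hbv : b = v := by simpa [List.getLast?_cons] using hv
  have hw : w ∉ a :: l₁ ++ l₂.concat b := (List.nodup_cons.mp (List.nodup_middle.mp hnd)).1
  refine Or.inr (Or.inr ⟨w, a :: l₁, l₂.concat b, rfl, ?_, ?_, h₁, h₂⟩) <;> rintro rfl <;> simp_all

/-- In a ttt with unique source, the unique shortest trail between two distinct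
nodes `u, v` is a directed path from `u` to `v`, or a directed path from `v` to
`u`, or the concatenation of two directed paths issuing from a common node `w`
distinct from `u` and `v`. -/
theorem stmt10 {V : Type u} [Fintype V] (E : V → V → Prop)
    (httt : IsTTT E) (hsrc : ∃! u : V, ∀ w, ¬ E w u)
    (u v : V) (huv : u ≠ v) (t : List V)
    (ht : IsDirSeq (fun a b => E a b ∨ E b a) u v t)
    (hmin : ∀ t' : List V, IsDirSeq (fun a b => E a b ∨ E b a) u v t' →
      t.length ≤ t'.length) :
    t.Chain' E ∨ t.Chain' (fun a b => E b a) ∨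
      ∃ (w : V) (l1 l2 : List V), t = l1 ++ w :: l2 ∧ w ≠ u ∧ w ≠ v ∧
        (l1 ++ [w]).Chain' (fun a b => E b a) ∧ (w :: l2).Chain' E :=
  stmt10_general E httt hsrc u v t ht hmin
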